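/- Let Σ be a finite alphabet and let L ⊆ Σ* be a bounded language. Then L is well-quasi-ordered by the infix relation if and only if its infix-downward closure {u ∈ Σ* | u is an infix of some v ∈ L} is well-quasi-ordered by the infix relation. -/

import Mathlib

/-- The `p`-fold concatenation of the word `x`. -/
def wpow {A : Type*} (x : List A) (p : ℕ) : List A := (List.replicate p x).flatten

/-- A subset `L` of words is well-quasi-ordered by the relation `r`. -/
def IsWqoOn {A : Type*} (L : Set (List A)) (r : List A → List A → Prop) : Prop :=
  ∀ f : ℕ → List A, (∀ n, f n ∈ L) → ∃ i j, i < j ∧ r (f i) (f j)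

/-- A language is bounded if it is contained in `w₁* ⋯ w_n*` for some words `wᵢ`. -/
def IsBoundedLang {A : Type*} (L : Set (List A)) : Prop :=
  ∃ (n : ℕ) (w : Fin n → List A), ∀ u ∈ L, ∃ c : Fin n → ℕ,
    u = (List.ofFn fun i : Fin n => wpow (w i) (c i)).flatten

/-!
Choose `vₖ ∈ L` containing the `k`-th word of a sequence in the closure. As `L` is
well-quasi-ordered, along a subsequence the `vₖ` form an infix chain, so `vₖ = Pₖ v₀ Sₖ` where
`Sₖ` grows by appending and `Pₖ` by prepending. Pigeonholing over the finitely many block shapes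
that a factor of a bounded language can have shows that such a growing chain of factors is
eventually periodic: every `Sₖ` is a prefix of some `m xᴺ`, and dually every `Pₖ` is a suffix of
some `yᴺ m'`. Hence all `vₖ` are factors of words `yᵃ c xᵇ`. Such a factor is `s yⁿ t xᵉ p` with
`s`, `t`, `p` from a finite set, and for fixed `s`, `t`, `p` it grows in the infix order with
`(n, e)`, so Dickson's lemma makes these factors well-quasi-ordered.
-/

open Filter

namespace List

variable {α : Type*} {l xs ys : List α}

theorem prefix_append_iff : l <+: xs ++ ys ↔ l <+: xs ∨ ∃ q, l = xs ++ q ∧ q <+: ys := by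
  refine ⟨fun ⟨t, ht⟩ => ?_, ?_⟩
  · rcases append_eq_append_iff.mp ht with ⟨a, rfl, -⟩ | ⟨c, rfl, rfl⟩
    · exact .inl (prefix_append l a)
    · exact .inr ⟨c, rfl, prefix_append c t⟩
  · rintro (h | ⟨q, rfl, hq⟩)
    · exact prefix_append_of_prefix h
    · exact (prefix_append_right_inj xs).mpr hq

theorem suffix_append_iff : l <:+ xs ++ ys ↔ l <:+ ys ∨ ∃ q, l = q ++ ys ∧ q <:+ xs := by
  refine ⟨fun ⟨t, ht⟩ => ?_, ?_⟩
  · rcases append_eq_append_iff.mp ht with ⟨a, rfl, rfl⟩ | ⟨c, rfl, rfl⟩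
    · exact .inr ⟨a, rfl, suffix_append t a⟩
    · exact .inl (suffix_append c l)
  · rintro (h | ⟨q, rfl, hq⟩)
    · exact suffix_append_of_suffix h
    · exact suffix_append_self_iff.mpr hq

theorem IsSuffix.append_append_infix {p p' s s' : List α} (hp : p <:+ p') (hs : s <+: s')
    (m : List α) : p ++ m ++ s <:+: p' ++ m ++ s' := by
  obtain ⟨a, rfl⟩ := hp
  obtain ⟨b, rfl⟩ := hs
  exact ⟨a, b, by simp⟩

theorem finite_setOf_suffix (l : List α) : {s | s <:+ l}.Finite :=
  l.tails.finite_toSet.subset fun s hs => (mem_tails s l).mpr hs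

theorem finite_setOf_prefix (l : List α) : {p | p <+: l}.Finite :=
  l.inits.finite_toSet.subset fun p hp => (mem_inits p l).mpr hp

theorem finite_setOf_infix (l : List α) : {t | t <:+: l}.Finite := by
  refine (l.tails.flatMap inits).finite_toSet.subset fun t ht => ?_
  obtain ⟨s, hts, hsl⟩ := infix_iff_prefix_suffix.mp ht
  exact mem_flatMap.mpr ⟨s, (mem_tails s l).mpr hsl, (mem_inits t s).mpr hts⟩

end List

theorem Set.Finite.partiallyWellOrderedOn_biUnion {α ι : Type*} {r : α → α → Prop}
    {I : Set ι} (hI : I.Finite) {s : ι → Set α} (hs : ∀ i ∈ I, (s i).PartiallyWellOrderedOn r) :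
    (⋃ i ∈ I, s i).PartiallyWellOrderedOn r := by
  induction I, hI using Set.Finite.induction_on with
  | empty => simp
  | insert _ _ ih =>
    rw [Set.biUnion_insert]
    exact (hs _ (Set.mem_insert _ _)).union (ih fun i hi => hs i (Set.mem_insert_of_mem _ hi))

theorem isWqoOn_iff_partiallyWellOrderedOn {A : Type*} {L : Set (List A)}
    {r : List A → List A → Prop} : IsWqoOn L r ↔ L.PartiallyWellOrderedOn r :=
  Set.partiallyWellOrderedOn_iff_exists_lt.symm

section wpow

variable {A : Type*} {x y s p u : List A} {n : ℕ}

@[simp] theorem wpow_zero (x : List A) : wpow x 0 = [] := rfl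

@[simp] theorem wpow_one (x : List A) : wpow x 1 = x := by simp [wpow]

theorem wpow_succ (x : List A) (n : ℕ) : wpow x (n + 1) = x ++ wpow x n := by
  simp [wpow, List.replicate_succ]

theorem wpow_succ' (x : List A) (n : ℕ) : wpow x (n + 1) = wpow x n ++ x := by
  simp [wpow, List.replicate_succ']

theorem reverse_wpow (x : List A) (n : ℕ) : (wpow x n).reverse = wpow x.reverse n := by
  induction n with
  | zero => rfl
  | succ n ih => rw [wpow_succ, wpow_succ', List.reverse_append, ih]

theorem exists_eq_wpow_append_of_prefix (h : p <+: wpow x n) :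
    ∃ k q, q <+: x ∧ p = wpow x k ++ q := by
  induction n generalizing p with
  | zero => exact ⟨0, [], List.nil_prefix, by simpa using h⟩
  | succ n ih =>
    rcases List.prefix_append_iff.mp (wpow_succ x n ▸ h) with h | ⟨q, rfl, hq⟩
    · exact ⟨0, p, h, rfl⟩
    · obtain ⟨k, q', hq', rfl⟩ := ih hq
      exact ⟨k + 1, q', hq', by simp [wpow_succ]⟩

theorem exists_eq_append_wpow_of_suffix (h : s <:+ wpow x n) :
    ∃ q k, q <:+ x ∧ s = q ++ wpow x k := by
  induction n generalizing s with
  | zero => exact ⟨[], 0, List.nil_suffix, by simpa using h⟩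
  | succ n ih =>
    rcases List.suffix_append_iff.mp (wpow_succ' x n ▸ h) with h | ⟨q, rfl, hq⟩
    · exact ⟨s, 0, h, by simp⟩
    · obtain ⟨q', k, hq', rfl⟩ := ih hq
      exact ⟨q', k + 1, hq', by simp [wpow_succ']⟩

theorem infix_or_exists_of_infix_wpow (h : u <:+: wpow x n) :
    u <:+: x ∨ ∃ s k p, s <:+ x ∧ p <+: x ∧ u = s ++ wpow x k ++ p := by
  induction n generalizing u with
  | zero => exact .inl ((List.infix_nil.mp h) ▸ List.nil_infix)
  | succ n ih =>
    rcases List.infix_append_iff.mp (wpow_succ x n ▸ h) with h | h | ⟨s, q, rfl, hs, hq⟩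
    · exact .inl h
    · exact ih h
    · obtain ⟨k, p, hp, rfl⟩ := exists_eq_wpow_append_of_prefix hq
      exact .inr ⟨s, k, p, hs, hp, by simp⟩

theorem append_wpow_suffix_append_wpow_succ (hs : s <:+ y) (n : ℕ) :
    s ++ wpow y n <:+ s ++ wpow y (n + 1) := by
  rw [wpow_succ, ← List.append_assoc]
  exact List.suffix_append_self_iff.mpr (List.suffix_append_of_suffix hs)

theorem wpow_append_prefix_wpow_succ_append (hp : p <+: x) (n : ℕ) :
    wpow x n ++ p <+: wpow x (n + 1) ++ p := by
  rw [wpow_succ', List.append_assoc]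
  exact (List.prefix_append_right_inj _).mpr (List.prefix_append_of_prefix hp)

end wpow

section blockLang

variable {A : Type*}

/-- The words `b₁^{n₁} ⋯ b_k^{n_k}` over the list of blocks `[b₁, …, b_k]`. -/
def blockLang : List (List A) → Set (List A)
  | [] => {[]}
  | b :: bs => {u | ∃ n, ∃ r ∈ blockLang bs, u = wpow b n ++ r}

variable {b u v : List A} {bs cs ws : List (List A)}

@[simp] theorem mem_blockLang_nil : u ∈ blockLang [] ↔ u = [] := Iff.rfl

theorem wpow_mem_blockLang_singleton (b : List A) (n : ℕ) : wpow b n ∈ blockLang [b] :=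
  ⟨n, [], rfl, by simp⟩

theorem mem_blockLang_singleton_self (b : List A) : b ∈ blockLang [b] := by
  simpa using wpow_mem_blockLang_singleton b 1

theorem append_mem_blockLang (hu : u ∈ blockLang bs) (hv : v ∈ blockLang cs) :
    u ++ v ∈ blockLang (bs ++ cs) := by
  induction bs generalizing u with
  | nil => simpa [mem_blockLang_nil.mp hu] using hv
  | cons b bs ih =>
    obtain ⟨n, r, hr, rfl⟩ := hu
    exact ⟨n, r ++ v, ih hr, by simp⟩

theorem reverse_mem_blockLang (hu : u ∈ blockLang bs) :
    u.reverse ∈ blockLang (bs.map List.reverse).reverse := by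
  induction bs generalizing u with
  | nil => simp [mem_blockLang_nil.mp hu]
  | cons b bs ih =>
    obtain ⟨n, r, hr, rfl⟩ := hu
    simpa [reverse_wpow] using append_mem_blockLang (ih hr)
      (wpow_mem_blockLang_singleton b.reverse n)

theorem IsBoundedLang.exists_subset_blockLang {L : Set (List A)} (h : IsBoundedLang L) :
    ∃ ws, L ⊆ blockLang ws := by
  obtain ⟨n, w, hw⟩ := h
  refine ⟨List.ofFn w, fun u hu => ?_⟩
  obtain ⟨c, rfl⟩ := hw u hu
  clear hw hu
  induction n with
  | zero => simp
  | succ n ih =>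
    rw [List.ofFn_succ, List.ofFn_succ, List.flatten_cons]
    exact ⟨c 0, _, ih (fun i => w i.succ) (fun i => c i.succ), rfl⟩

theorem exists_mem_blockLang_of_prefix (hv : v ∈ blockLang ws) (hu : u <+: v) :
    ∃ ws' p, ws' <+: ws ∧ p <:+: ws.flatten ∧ u ∈ blockLang (ws' ++ [p]) := by
  induction ws generalizing u v with
  | nil =>
    obtain rfl : u = [] := List.prefix_nil.mp (mem_blockLang_nil.mp hv ▸ hu)
    exact ⟨[], [], List.nil_prefix, List.nil_infix, wpow_mem_blockLang_singleton [] 0⟩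
  | cons b bs ih =>
    obtain ⟨n, r, hr, rfl⟩ := hv
    rcases List.prefix_append_iff.mp hu with hu | ⟨q, rfl, hq⟩
    · obtain ⟨k, p, hp, rfl⟩ := exists_eq_wpow_append_of_prefix hu
      exact ⟨[b], p, by simp, hp.isInfix.trans List.infix_append_left,
        ⟨k, p, mem_blockLang_singleton_self p, rfl⟩⟩
    · obtain ⟨ws', p, hws', hp, hq⟩ := ih hr hq
      exact ⟨b :: ws', p, List.cons_prefix_cons.mpr ⟨rfl, hws'⟩,
        hp.trans List.infix_append_right, ⟨n, q, hq, rfl⟩⟩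

theorem exists_mem_blockLang_of_infix (hv : v ∈ blockLang ws) (hu : u <:+: v) :
    ∃ s ws' p, s <:+: ws.flatten ∧ ws' <:+: ws ∧ p <:+: ws.flatten ∧
      u ∈ blockLang (s :: (ws' ++ [p])) := by
  induction ws generalizing u v with
  | nil =>
    obtain rfl : u = [] := List.infix_nil.mp (mem_blockLang_nil.mp hv ▸ hu)
    exact ⟨[], [], [], List.nil_infix, List.nil_infix, List.nil_infix,
      ⟨0, [], wpow_mem_blockLang_singleton [] 0, rfl⟩⟩
  | cons b bs ih =>
    have hb : b <:+: (b :: bs).flatten := List.infix_append_left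
    obtain ⟨n, r, hr, rfl⟩ := hv
    rcases List.infix_append_iff.mp hu with hu | hu | ⟨l, q, rfl, hl, hq⟩
    · rcases infix_or_exists_of_infix_wpow hu with hu | ⟨s, k, p, hs, hp, rfl⟩
      · exact ⟨u, [], [], hu.trans hb, List.nil_infix, List.nil_infix,
          ⟨1, [], wpow_mem_blockLang_singleton [] 0, by simp⟩⟩
      · refine ⟨s, [b], p, hs.isInfix.trans hb, List.infix_append_left, hp.isInfix.trans hb, ?_⟩
        exact ⟨1, _, ⟨k, p, mem_blockLang_singleton_self p, rfl⟩, by simp⟩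
    · obtain ⟨s, ws', p, hs, hws', hp, hu⟩ := ih hr hu
      exact ⟨s, ws', p, hs.trans List.infix_append_right,
        hws'.trans (List.suffix_cons b bs).isInfix, hp.trans List.infix_append_right, hu⟩
    · obtain ⟨s, k, hs, rfl⟩ := exists_eq_append_wpow_of_suffix hl
      obtain ⟨ws', p, hws', hp, hq⟩ := exists_mem_blockLang_of_prefix hr hq
      exact ⟨s, b :: ws', p, hs.isInfix.trans hb, (List.cons_prefix_cons.mpr ⟨rfl, hws'⟩).isInfix,
        hp.trans List.infix_append_right, ⟨1, _, ⟨k, q, hq, rfl⟩, by simp⟩⟩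

end blockLang

section prefixChain

variable {A : Type*} {S : ℕ → List A}

theorem exists_prefix_of_frequently (hS : ∀ k, S k <+: S (k + 1)) {P : ℕ → Prop}
    (h : ∃ᶠ k in atTop, P k) (k : ℕ) : ∃ j, P j ∧ S k <+: S j := by
  obtain ⟨j, hkj, hj⟩ := frequently_atTop.mp h k
  exact ⟨j, hj, Nat.rel_of_forall_rel_succ_of_le (· <+: ·) hS hkj⟩

theorem exists_prefix_append_wpow_of_frequently_mem_blockLang {bs : List (List A)}
    (hS : ∀ k, S k <+: S (k + 1)) (h : ∃ᶠ k in atTop, S k ∈ blockLang bs) :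
    ∃ m x, ∀ k, ∃ N, S k <+: m ++ wpow x N := by
  induction bs generalizing S with
  | nil =>
    refine ⟨[], [], fun k => ⟨0, ?_⟩⟩
    obtain ⟨j, hj, hkj⟩ := exists_prefix_of_frequently hS h k
    simpa [mem_blockLang_nil.mp hj] using hkj
  | cons b bs ih =>
    by_cases hb : ∀ k, ∃ N, S k <+: wpow b N
    · exact ⟨[], b, hb⟩
    push Not at hb
    obtain ⟨k₀, hk₀⟩ := hb
    -- `S k₀` is a prefix of no power of `b`, so from `k₀` on the leading power `bⁿ` of `S k` is a
    -- prefix of `S k₀`: finitely many choices.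
    have hfront : ∃ᶠ k in atTop, ∃ B ∈ (S k₀).inits, ∃ r ∈ blockLang bs, S k = B ++ r := by
      refine (h.and_eventually (eventually_ge_atTop k₀)).mono ?_
      rintro k ⟨⟨n, r, hr, hk⟩, hk₀k⟩
      have hprefix : S k₀ <+: wpow b n ++ r :=
        hk ▸ Nat.rel_of_forall_rel_succ_of_le (· <+: ·) hS hk₀k
      rcases List.prefix_or_prefix_of_prefix hprefix (List.prefix_append _ _) with h' | h'
      · exact absurd h' (hk₀ n)
      · exact ⟨wpow b n, (List.mem_inits _ _).mpr h', r, hr, hk⟩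
    obtain ⟨B, -, hB⟩ := (S k₀).inits.finite_toSet.frequently_exists.mp hfront
    have hrest : ∃ᶠ k in atTop, (S k).drop B.length ∈ blockLang bs :=
      hB.mono fun k ⟨r, hr, hk⟩ => by simpa [hk] using hr
    obtain ⟨m, x, hmx⟩ := ih (fun k => (hS k).drop B.length) hrest
    refine ⟨B ++ m, x, fun k => ?_⟩
    obtain ⟨j, ⟨r, -, hj⟩, hkj⟩ := exists_prefix_of_frequently hS hB k
    obtain ⟨N, hN⟩ := hmx j
    refine ⟨N, hkj.trans ?_⟩
    rw [hj, List.append_assoc]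
    simpa [hj] using hN

theorem exists_prefix_append_wpow_of_infix_mem_blockLang {ws : List (List A)}
    (hS : ∀ k, S k <+: S (k + 1)) (h : ∀ k, ∃ v ∈ blockLang ws, S k <:+: v) :
    ∃ m x, ∀ k, ∃ N, S k <+: m ++ wpow x N := by
  let shapes := {s | s <:+: ws.flatten} ×ˢ {ws' | ws' <:+: ws} ×ˢ {p | p <:+: ws.flatten}
  have hshapes : shapes.Finite := (List.finite_setOf_infix _).prod
    ((List.finite_setOf_infix _).prod (List.finite_setOf_infix _))
  have hmem : ∃ᶠ k in atTop, ∃ σ ∈ shapes, S k ∈ blockLang (σ.1 :: (σ.2.1 ++ [σ.2.2])) :=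
    Frequently.of_forall fun k => by
      obtain ⟨v, hv, hk⟩ := h k
      obtain ⟨s, ws', p, hs, hws', hp, hmem⟩ := exists_mem_blockLang_of_infix hv hk
      exact ⟨(s, ws', p), ⟨hs, hws', hp⟩, hmem⟩
  obtain ⟨σ, -, hσ⟩ := hshapes.frequently_exists.mp hmem
  exact exists_prefix_append_wpow_of_frequently_mem_blockLang hS hσ

end prefixChain

section infixChain

variable {A : Type*}

theorem exists_eq_append_append_of_infix_succ {v : ℕ → List A} (hv : ∀ k, v k <:+: v (k + 1)) :
    ∃ P S : ℕ → List A, (∀ k, P k <:+ P (k + 1)) ∧ (∀ k, S k <+: S (k + 1)) ∧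
      ∀ k, v k = P k ++ v 0 ++ S k := by
  choose α β hαβ using hv
  let P : ℕ → List A := fun k => Nat.rec [] (fun k Pk => α k ++ Pk) k
  let S : ℕ → List A := fun k => Nat.rec [] (fun k Sk => Sk ++ β k) k
  refine ⟨P, S, fun k => List.suffix_append _ _, fun k => List.prefix_append _ _, fun k => ?_⟩
  induction k with
  | zero => simp [P, S]
  | succ k ih =>
    rw [← hαβ k, ih]
    simp [P, S]

theorem exists_eq_of_infix_wpow_append_wpow {u y c x : List A} {a b : ℕ}
    (h : u <:+: wpow y a ++ c ++ wpow x b) :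
    ∃ s t p n e, s <:+ y ∧ t <:+: y ++ c ++ x ∧ p <+: x ∧
      u = s ++ wpow y n ++ t ++ wpow x e ++ p := by
  have hy : y <:+: y ++ c ++ x := List.infix_append_left.trans List.infix_append_left
  have hc : c <:+: y ++ c ++ x := List.infix_append _ _ _
  have hx : x <:+: y ++ c ++ x := List.infix_append_right
  rw [List.append_assoc] at h
  rcases List.infix_append_iff.mp h with h | h | ⟨l, q, rfl, hl, hq⟩
  · rcases infix_or_exists_of_infix_wpow h with h | ⟨s, n, p, hs, hp, rfl⟩
    · exact ⟨[], u, [], 0, 0, List.nil_suffix, h.trans hy, List.nil_prefix, by simp⟩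
    · exact ⟨s, p, [], n, 0, hs, hp.isInfix.trans hy, List.nil_prefix, by simp⟩
  · rcases List.infix_append_iff.mp h with h | h | ⟨l, q, rfl, hl, hq⟩
    · exact ⟨[], u, [], 0, 0, List.nil_suffix, h.trans hc, List.nil_prefix, by simp⟩
    · rcases infix_or_exists_of_infix_wpow h with h | ⟨s, e, p, hs, hp, rfl⟩
      · exact ⟨[], u, [], 0, 0, List.nil_suffix, h.trans hx, List.nil_prefix, by simp⟩
      · exact ⟨[], s, p, 0, e, List.nil_suffix, hs.isInfix.trans hx, hp, by simp⟩
    · obtain ⟨e, p, hp, rfl⟩ := exists_eq_wpow_append_of_prefix hq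
      exact ⟨[], l, p, 0, e, List.nil_suffix, hl.isInfix.trans hc, hp, by simp⟩
  · obtain ⟨s, n, hs, rfl⟩ := exists_eq_append_wpow_of_suffix hl
    rcases List.prefix_append_iff.mp hq with hq | ⟨r, rfl, hr⟩
    · exact ⟨s, q, [], n, 0, hs, hq.isInfix.trans hc, List.nil_prefix, by simp⟩
    · obtain ⟨e, p, hp, rfl⟩ := exists_eq_wpow_append_of_prefix hr
      exact ⟨s, c, p, n, e, hs, hc, hp, by simp⟩

theorem partiallyWellOrderedOn_range_wpow_append_wpow {s y t x p : List A} (hs : s <:+ y)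
    (hp : p <+: x) :
    (Set.range fun ne : ℕ × ℕ => s ++ wpow y ne.1 ++ t ++ wpow x ne.2 ++ p).PartiallyWellOrderedOn
      (· <:+: ·) := by
  rw [← Set.image_univ]
  refine (Set.isPWO_of_wellQuasiOrderedLE Set.univ).image_of_monotone_on ?_
  rintro ⟨n, e⟩ - ⟨n', e'⟩ - ⟨hn, he⟩
  have hleft := Nat.rel_of_forall_rel_succ_of_le (· <:+ ·)
    (append_wpow_suffix_append_wpow_succ hs) (show n ≤ n' from hn)
  have hright := Nat.rel_of_forall_rel_succ_of_le (· <+: ·)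
    (wpow_append_prefix_wpow_succ_append hp) (show e ≤ e' from he)
  simpa [List.append_assoc] using hleft.append_append_infix hright t

theorem partiallyWellOrderedOn_infix_wpow_append_wpow (y c x : List A) :
    {u | ∃ a b, u <:+: wpow y a ++ c ++ wpow x b}.PartiallyWellOrderedOn (· <:+: ·) := by
  let params := {s | s <:+ y} ×ˢ {t | t <:+: y ++ c ++ x} ×ˢ {p | p <+: x}
  have hparams : params.Finite := (List.finite_setOf_suffix _).prod
    ((List.finite_setOf_infix _).prod (List.finite_setOf_prefix _))
  refine (hparams.partiallyWellOrderedOn_biUnion fun σ hσ =>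
    partiallyWellOrderedOn_range_wpow_append_wpow (t := σ.2.1) hσ.1 hσ.2.2).mono ?_
  rintro u ⟨a, b, h⟩
  obtain ⟨s, t, p, n, e, hs, ht, hp, rfl⟩ := exists_eq_of_infix_wpow_append_wpow h
  exact Set.mem_biUnion (x := (s, t, p)) ⟨hs, ht, hp⟩ ⟨(n, e), rfl⟩

theorem exists_infix_wpow_append_wpow_of_infix_succ {ws : List (List A)} {v : ℕ → List A}
    (hv : ∀ k, v k <:+: v (k + 1)) (hws : ∀ k, v k ∈ blockLang ws) :
    ∃ y c x, ∀ k, ∃ a b, v k <:+: wpow y a ++ c ++ wpow x b := by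
  obtain ⟨P, S, hP, hS, hvPS⟩ := exists_eq_append_append_of_infix_succ hv
  obtain ⟨m, x, hx⟩ := exists_prefix_append_wpow_of_infix_mem_blockLang hS fun k =>
    ⟨v k, hws k, hvPS k ▸ (List.suffix_append _ _).isInfix⟩
  obtain ⟨m', y, hy⟩ := exists_prefix_append_wpow_of_infix_mem_blockLang
    (S := fun k => (P k).reverse) (fun k => List.reverse_prefix.mpr (hP k)) fun k =>
    ⟨(v k).reverse, reverse_mem_blockLang (hws k),
      List.reverse_infix.mpr (hvPS k ▸ List.infix_append_left.trans List.infix_append_left)⟩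
  refine ⟨y.reverse, m'.reverse ++ v 0 ++ m, x, fun k => ?_⟩
  obtain ⟨a, ha⟩ := hy k
  obtain ⟨b, hb⟩ := hx k
  have hPk : P k <:+ wpow y.reverse a ++ m'.reverse := by
    simpa [reverse_wpow] using List.reverse_suffix.mpr ha
  refine ⟨a, b, ?_⟩
  simpa [hvPS k, List.append_assoc] using hPk.append_append_infix hb (v 0)

theorem partiallyWellOrderedOn_infix_of_infix_succ {ws : List (List A)} {v : ℕ → List A}
    (hv : ∀ k, v k <:+: v (k + 1)) (hws : ∀ k, v k ∈ blockLang ws) :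
    {u | ∃ k, u <:+: v k}.PartiallyWellOrderedOn (· <:+: ·) := by
  obtain ⟨y, c, x, hyx⟩ := exists_infix_wpow_append_wpow_of_infix_succ hv hws
  refine (partiallyWellOrderedOn_infix_wpow_append_wpow y c x).mono ?_
  rintro u ⟨k, hk⟩
  obtain ⟨a, b, h⟩ := hyx k
  exact ⟨a, b, hk.trans h⟩

end infixChain

theorem bounded_wqo_infix_iff_downward_closure_wqo_general
    {A : Type*} (L : Set (List A)) (hbd : IsBoundedLang L) :
    IsWqoOn L (· <:+: ·)
    ↔
    IsWqoOn {u | ∃ v ∈ L, u <:+: v} (· <:+: ·) := by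
  simp only [isWqoOn_iff_partiallyWellOrderedOn]
  refine ⟨fun hL => ?_, fun hD => hD.mono fun v hv => ⟨v, hv, List.infix_refl v⟩⟩
  obtain ⟨ws, hws⟩ := hbd.exists_subset_blockLang
  refine Set.partiallyWellOrderedOn_iff_exists_lt.mpr fun f hf => ?_
  choose v hvL hfv using hf
  obtain ⟨g, hg⟩ := hL.exists_monotone_subseq hvL
  have hchain := partiallyWellOrderedOn_infix_of_infix_succ (v := v ∘ g)
    (fun k => hg k (k + 1) k.le_succ) (fun k => hws (hvL (g k)))
  obtain ⟨i, j, hij, hfij⟩ := hchain.exists_lt (f := f ∘ g) fun k => ⟨k, hfv (g k)⟩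
  exact ⟨g i, g j, g.strictMono hij, hfij⟩

/-- A bounded language is well-quasi-ordered by the infix relation
iff its infix-downward closure is. -/
theorem bounded_wqo_infix_iff_downward_closure_wqo
    {A : Type*} [Fintype A] (L : Set (List A)) (hbd : IsBoundedLang L) :
    IsWqoOn L (· <:+: ·)
    ↔
    IsWqoOn {u | ∃ v ∈ L, u <:+: v} (· <:+: ·) :=
  bounded_wqo_infix_iff_downward_closure_wqo_general L hbd
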